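/- Let V' : [0,∞) → ℝ be continuous with V'(x) < 0 for all x ≥ 0, r : [0,∞) → ℝ continuous with r(0) = 0, and define Φ(x) = ∫_x^∞ (−1/V'(u) + r(u)) u^{−2} du for x > 0 (assumed convergent, with −1/V' + r bounded). If moreover r(u)/u → L ∈ ℝ as u → 0⁺, then lim_{x→0⁺} x·Φ(x) = 1/|V'(0)|. -/

import Mathlib

/-!
With `g = -1/V' + r`, continuity gives `g u → g 0 = 1/|V' 0|` as `u → 0⁺`, and since
`∫_x^∞ u⁻² du = 1/x`, we have `x Φ(x) - g 0 = x ∫_x^∞ (g u - g 0) u⁻² du`. Split this integral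
at a `δ` with `|g - g 0| ≤ ε` on `(0, δ]`: the part over `(x, δ]` is at most `ε x ∫_x^∞ u⁻² = ε`,
and the part over `(δ, ∞)` is a constant, killed by the factor `x`.
-/

open MeasureTheory Filter Set Topology

lemma eqOn_inv_sq_rpow : EqOn (fun u : ℝ => (u ^ 2)⁻¹) (fun u => u ^ (-2 : ℝ)) (Ioi 0) := by
  intro u hu
  simp [Real.rpow_neg (le_of_lt hu)]

lemma integrableOn_Ioi_inv_sq {x : ℝ} (hx : 0 < x) :
    IntegrableOn (fun u : ℝ => (u ^ 2)⁻¹) (Ioi x) :=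
  (integrableOn_Ioi_rpow_of_lt (by norm_num) hx).congr_fun
    (eqOn_inv_sq_rpow.mono (Ioi_subset_Ioi hx.le)).symm measurableSet_Ioi

lemma integral_Ioi_inv_sq {x : ℝ} (hx : 0 < x) : ∫ u in Ioi x, (u ^ 2)⁻¹ = x⁻¹ := by
  rw [setIntegral_congr_fun measurableSet_Ioi (eqOn_inv_sq_rpow.mono (Ioi_subset_Ioi hx.le)),
    integral_Ioi_rpow_of_lt (by norm_num) hx]
  norm_num [Real.rpow_neg_one]

lemma abs_intervalIntegral_div_sq_le {h : ℝ → ℝ} {x δ ε : ℝ} (hx : 0 < x) (hxδ : x ≤ δ)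
    (hε : 0 ≤ ε) (hbound : ∀ u ∈ Ioc x δ, |h u| ≤ ε) :
    |∫ u in x..δ, h u / u ^ 2| ≤ ε / x := by
  have hsq : IntegrableOn (fun u : ℝ => (u ^ 2)⁻¹) (Ioi x) := integrableOn_Ioi_inv_sq hx
  calc ‖∫ u in x..δ, h u / u ^ 2‖
      ≤ ∫ u in x..δ, ε * (u ^ 2)⁻¹ := by
        refine intervalIntegral.norm_integral_le_of_norm_le hxδ (ae_of_all _ fun u hu => ?_)
          ((intervalIntegrable_iff_integrableOn_Ioc_of_le hxδ).2
            ((hsq.mono_set Ioc_subset_Ioi_self).const_mul ε))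
        rw [Real.norm_eq_abs, abs_div, abs_of_nonneg (sq_nonneg u), div_eq_mul_inv]
        exact mul_le_mul_of_nonneg_right (hbound u hu) (by positivity)
    _ = ε * (x⁻¹ - δ⁻¹) := by
        rw [intervalIntegral.integral_const_mul, ← intervalIntegral.integral_Ioi_sub_Ioi hsq hxδ,
          integral_Ioi_inv_sq hx, integral_Ioi_inv_sq (hx.trans_le hxδ)]
    _ ≤ ε / x := by
        rw [div_eq_mul_inv]
        exact mul_le_mul_of_nonneg_left (sub_le_self _ (inv_nonneg.2 (hx.le.trans hxδ))) hε

theorem tendsto_mul_integral_Ioi_div_sq_of_tendsto_zero {h : ℝ → ℝ}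
    (hh : Tendsto h (𝓝[>] 0) (𝓝 0))
    (hint : ∀ x > (0 : ℝ), IntegrableOn (fun u => h u / u ^ 2) (Ioi x)) :
    Tendsto (fun x => x * ∫ u in Ioi x, h u / u ^ 2) (𝓝[>] 0) (𝓝 0) := by
  rw [Metric.tendsto_nhds]
  intro ε hε
  obtain ⟨δ, hδ, hsmall⟩ := mem_nhdsGT_iff_exists_Ioc_subset.mp
    (hh (Metric.closedBall_mem_nhds 0 (half_pos hε)))
  set K := ∫ u in Ioi δ, h u / u ^ 2
  have hK : Tendsto (fun x : ℝ => x * K) (𝓝[>] 0) (𝓝 0) := by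
    simpa using ((continuous_id.mul_const K).tendsto 0).mono_left nhdsWithin_le_nhds
  filter_upwards [Ioo_mem_nhdsGT hδ, Metric.tendsto_nhds.mp hK (ε / 2) (half_pos hε)]
    with x ⟨hx, hxδ⟩ hxK
  have hnear : |∫ u in x..δ, h u / u ^ 2| ≤ ε / 2 / x :=
    abs_intervalIntegral_div_sq_le hx hxδ.le (half_pos hε).le fun u hu => by
      simpa using hsmall ⟨hx.trans hu.1, hu.2⟩
  rw [← intervalIntegral.integral_interval_add_Ioi (hint x hx) (hint δ hδ)]
  rw [Real.dist_eq, sub_zero] at hxK ⊢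
  calc |x * ((∫ u in x..δ, h u / u ^ 2) + K)|
      ≤ x * |∫ u in x..δ, h u / u ^ 2| + |x * K| := by
        simpa only [mul_add, abs_mul, abs_of_pos hx] using abs_add_le (x * _) (x * K)
    _ < ε / 2 + ε / 2 := by
        refine add_lt_add_of_le_of_lt ?_ hxK
        calc x * |∫ u in x..δ, h u / u ^ 2| ≤ x * (ε / 2 / x) := by gcongr
          _ = ε / 2 := mul_div_cancel₀ _ hx.ne'
    _ = ε := add_halves ε

theorem tendsto_mul_integral_Ioi_div_sq {g : ℝ → ℝ} {c : ℝ}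
    (hg : Tendsto g (𝓝[>] 0) (𝓝 c))
    (hint : ∀ x > (0 : ℝ), IntegrableOn (fun u => g u / u ^ 2) (Ioi x)) :
    Tendsto (fun x => x * ∫ u in Ioi x, g u / u ^ 2) (𝓝[>] 0) (𝓝 c) := by
  have hsub_div (u : ℝ) : (g u - c) / u ^ 2 = g u / u ^ 2 - c * (u ^ 2)⁻¹ := by ring
  have hint' (x : ℝ) (hx : 0 < x) :
      IntegrableOn (fun u => (g u - c) / u ^ 2) (Ioi x) :=
    ((hint x hx).sub ((integrableOn_Ioi_inv_sq hx).const_mul c)).congr_fun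
      (fun u _ => (hsub_div u).symm) measurableSet_Ioi
  have hlim := (tendsto_mul_integral_Ioi_div_sq_of_tendsto_zero
    (by simpa using hg.sub_const c) hint').add_const c
  rw [zero_add] at hlim
  refine hlim.congr' (eventually_nhdsWithin_of_forall fun x (hx : 0 < x) => ?_)
  rw [setIntegral_congr_fun measurableSet_Ioi fun u _ => hsub_div u,
    integral_sub (hint x hx) ((integrableOn_Ioi_inv_sq hx).const_mul c), integral_const_mul,
    integral_Ioi_inv_sq hx, mul_sub, mul_left_comm x c, mul_inv_cancel₀ hx.ne', mul_one,
    sub_add_cancel]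

theorem potential_Phi_asymptotics_at_zero_general (V' r : ℝ → ℝ)
    (hV'cont : ContinuousOn V' (Set.Ici 0))
    (hV'neg : ∀ x ≥ (0 : ℝ), V' x < 0)
    (hrcont : ContinuousOn r (Set.Ici 0))
    (hr0 : r 0 = 0)
    (hint : ∀ x > (0 : ℝ), IntegrableOn (fun u => (-(1 / V' u) + r u) / u ^ 2) (Set.Ioi x))
    (Φ : ℝ → ℝ)
    (hΦ : Φ = fun x => ∫ u in Set.Ioi x, (-(1 / V' u) + r u) / u ^ 2) :
    Filter.Tendsto (fun x => x * Φ x) (nhdsWithin 0 (Set.Ioi 0)) (nhds (1 / |V' 0|)) := by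
  subst hΦ
  have hcont : ContinuousOn (fun u => -(1 / V' u) + r u) (Ici 0) :=
    (continuousOn_const.div hV'cont fun x hx => (hV'neg x hx).ne).neg.add hrcont
  have hvalue : -(1 / V' 0) + r 0 = 1 / |V' 0| := by
    rw [hr0, abs_of_neg (hV'neg 0 le_rfl), div_neg, add_zero]
  refine tendsto_mul_integral_Ioi_div_sq ?_ hint
  exact hvalue ▸ ((hcont 0 self_mem_Ici).mono Ioi_subset_Ici_self).tendsto

theorem potential_Phi_asymptotics_at_zero (V' r : ℝ → ℝ) (L : ℝ)
    (hV'cont : ContinuousOn V' (Set.Ici 0))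
    (hV'neg : ∀ x ≥ (0 : ℝ), V' x < 0)
    (hrcont : ContinuousOn r (Set.Ici 0))
    (hr0 : r 0 = 0)
    (hrL : Filter.Tendsto (fun u => r u / u) (nhdsWithin 0 (Set.Ioi 0)) (nhds L))
    (hbdd : ∃ B : ℝ, ∀ u > (0 : ℝ), |(-(1 / V' u) + r u)| ≤ B)
    (hint : ∀ x > (0 : ℝ), IntegrableOn (fun u => (-(1 / V' u) + r u) / u ^ 2) (Set.Ioi x))
    (Φ : ℝ → ℝ)
    (hΦ : Φ = fun x => ∫ u in Set.Ioi x, (-(1 / V' u) + r u) / u ^ 2) :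
    Filter.Tendsto (fun x => x * Φ x) (nhdsWithin 0 (Set.Ioi 0)) (nhds (1 / |V' 0|)) :=
  potential_Phi_asymptotics_at_zero_general V' r hV'cont hV'neg hrcont hr0 hint Φ hΦ
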